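/- There exists an uncountable set E ⊆ [0,1] such that every x ∈ E is not normal to base 2, and for every x ∈ E the closure of {2^n x (mod 1) : n ≥ 1} equals [0,1] and the closure of {3^n x (mod 1) : n ≥ 1} equals [0,1]. -/

import Mathlib

/-!
Baire category. Fix a base `b ≥ 2`. For a rational interval `(p, q) ⊆ [0, 1]`, the points
whose `b`-orbit modulo 1 meets `(p, q)` contain the dense open union of the intervals
`((m + p) / bⁿ, (m + q) / bⁿ)`. For `N : ℕ`, the points having more than `3/4` zeros among
their first `M` digits for some `M ≥ N` contain the dense open union of the intervals
`(k / bᵐ, k / bᵐ + b^{-M})` with `M = 4(m + N + 1)`: the digits `m + 1, …, M` of such points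
vanish. Hence the points that are not normal and have dense orbits form a residual set, and a
residual set meets `(0, 1)` in an uncountable set because countable subsets of `ℝ` are meagre.
-/

open Filter Set
open scoped Classical

/-- The `j`-th digit of `x` in base `b`: `a_j(x) = ⌊b^j x⌋ mod b`. -/
noncomputable def digit (b : ℕ) (x : ℝ) (j : ℕ) : ℕ :=
  (⌊(b : ℝ) ^ j * x⌋ % b).toNat

/-- The number of occurrences of the block `d = (d_1, …, d_k)` among the first `N` digits
of `x` in base `b`: `#{0 ≤ j ≤ N - k : a_{j+1}(x) = d_1, …, a_{j+k}(x) = d_k}`. -/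
noncomputable def blockCount (b : ℕ) (x : ℝ) {k : ℕ} (d : Fin k → ℕ) (N : ℕ) : ℕ :=
  ((Finset.range (N + 1 - k)).filter
    (fun j => ∀ i : Fin k, digit b x (j + 1 + (i : ℕ)) = d i)).card

/-- `x` is normal to base `b` if every block of `k` digits occurs with frequency `b⁻ᵏ`. -/
def IsNormal (b : ℕ) (x : ℝ) : Prop :=
  ∀ k : ℕ, 1 ≤ k → ∀ d : Fin k → ℕ, (∀ i, d i < b) →
    Tendsto (fun N : ℕ => (blockCount b x d N : ℝ) / (N : ℝ)) atTop
      (nhds (((b : ℝ) ^ k)⁻¹))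

/-- The closure of the orbit `{b^n x (mod 1) : n ≥ 1}`. -/
noncomputable def orbitClosure (b : ℕ) (x : ℝ) : Set ℝ :=
  closure {y : ℝ | ∃ n : ℕ, 1 ≤ n ∧ y = Int.fract ((b : ℝ) ^ n * x)}

open scoped Topology

lemma digit_eq_zero_of_mem_Ico {b m M j : ℕ} (hb : 0 < b) (k : ℤ) (hmj : m < j) (hjM : j ≤ M)
    {x : ℝ} (hx : x ∈ Ico ((k : ℝ) / b ^ m) (k / b ^ m + 1 / b ^ M)) : digit b x j = 0 := by
  have hb' : (1 : ℝ) ≤ b := by exact_mod_cast hb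
  have hpow : (b : ℝ) ^ j = b ^ (j - m) * b ^ m := by rw [← pow_add, Nat.sub_add_cancel hmj.le]
  have hleft : (b : ℝ) ^ j * (k / b ^ m) = ((k * b ^ (j - m) : ℤ) : ℝ) := by
    push_cast; rw [hpow]; field_simp
  have hwidth : (b : ℝ) ^ j * (1 / b ^ M) ≤ 1 := by
    rw [mul_one_div, div_le_one (by positivity)]
    exact pow_le_pow_right₀ hb' hjM
  have hfloor : ⌊(b : ℝ) ^ j * x⌋ = k * b ^ (j - m) := by
    have hbj : (0 : ℝ) < b ^ j := by positivity
    rw [Int.floor_eq_iff, ← hleft]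
    constructor
    · exact mul_le_mul_of_nonneg_left hx.1 hbj.le
    · calc (b : ℝ) ^ j * x < b ^ j * (k / b ^ m + 1 / b ^ M) := mul_lt_mul_of_pos_left hx.2 hbj
        _ ≤ b ^ j * (k / b ^ m) + 1 := by rw [mul_add]; linarith
  have hdvd : (b : ℤ) ∣ k * b ^ (j - m) := (dvd_pow_self _ (by omega)).mul_left _
  simp [digit, hfloor, Int.emod_eq_zero_of_dvd hdvd]

lemma sub_le_blockCount_zero_of_mem_Ico {b m M : ℕ} (hb : 0 < b) (k : ℤ) {x : ℝ}
    (hx : x ∈ Ico ((k : ℝ) / b ^ m) (k / b ^ m + 1 / b ^ M)) :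
    M - m ≤ blockCount b x (fun _ : Fin 1 => 0) M := by
  rw [← Nat.card_Ico]
  refine Finset.card_le_card fun j hj => ?_
  rw [Finset.mem_Ico] at hj
  simp only [Finset.mem_filter, Finset.mem_range, Fin.forall_fin_one, Fin.val_zero, add_zero]
  exact ⟨by omega, digit_eq_zero_of_mem_Ico hb k (by omega) (by omega) hx⟩

lemma not_isNormal_of_frequently_lt {b : ℕ} (hb : 0 < b) {x c : ℝ} (hc : (b : ℝ)⁻¹ < c)
    (h : ∃ᶠ N in atTop, c < (blockCount b x (fun _ : Fin 1 => 0) N : ℝ) / N) :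
    ¬ IsNormal b x := by
  intro hx
  have hlim := hx 1 le_rfl (fun _ => 0) (fun _ => hb)
  rw [pow_one] at hlim
  obtain ⟨N, hcN, hNc⟩ := (h.and_eventually (hlim.eventually (gt_mem_nhds hc))).exists
  exact lt_asymm hcN hNc

lemma dense_of_eventually_int_add_div_pow_mem_closure {b : ℕ} (hb : 1 < b) {s : Set ℝ} {t : ℝ}
    (ht₀ : 0 ≤ t) (ht₁ : t < 1)
    (h : ∀ᶠ n in atTop, ∀ m : ℤ, (m + t) / (b : ℝ) ^ n ∈ closure s) : Dense s := by
  rw [← dense_closure, Metric.dense_iff]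
  intro y ε hε
  have hb' : (1 : ℝ) < b := by exact_mod_cast hb
  have hsmall : ∀ᶠ n in atTop, ((b : ℝ) ^ n)⁻¹ < ε :=
    (tendsto_inv_atTop_zero.comp (tendsto_pow_atTop_atTop_of_one_lt hb')).eventually
      (gt_mem_nhds hε)
  obtain ⟨n, hnε, hmem⟩ := (hsmall.and h).exists
  set β : ℝ := (b : ℝ) ^ n
  have hβ : 0 < β := by positivity
  have hnum : |(⌊β * y⌋ + t) - β * y| < 1 :=
    abs_lt.2 ⟨by linarith [Int.lt_floor_add_one (β * y)], by linarith [Int.floor_le (β * y)]⟩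
  refine ⟨(⌊β * y⌋ + t) / β, ?_, hmem _⟩
  calc dist ((⌊β * y⌋ + t) / β) y = |(⌊β * y⌋ + t) - β * y| / β := by
        rw [Real.dist_eq, ← abs_of_pos hβ, ← abs_div, abs_of_pos hβ]
        congr 1
        field_simp
    _ < 1 / β := div_lt_div_of_pos_right hnum hβ
    _ < ε := by rwa [one_div]

lemma eventually_residual_exists_blockCount_zero_gt {b : ℕ} (hb : 1 < b) (N : ℕ) :
    ∀ᶠ x in residual ℝ, ∃ M ≥ N,
      (3 / 4 : ℝ) < (blockCount b x (fun _ : Fin 1 => 0) M : ℝ) / M := by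
  set U : ℕ → ℤ → Set ℝ := fun m k =>
    Ioo ((k : ℝ) / b ^ m) (k / b ^ m + 1 / b ^ (4 * (m + N + 1)))
  have hopen : IsOpen (⋃ (m) (k), U m k) :=
    isOpen_iUnion fun _ => isOpen_iUnion fun _ => isOpen_Ioo
  have hdense : Dense (⋃ (m) (k), U m k) := by
    refine dense_of_eventually_int_add_div_pow_mem_closure hb le_rfl one_pos
      (Eventually.of_forall fun m k => closure_mono (subset_iUnion₂ m k) ?_)
    have hlt : (k : ℝ) / b ^ m < k / b ^ m + 1 / b ^ (4 * (m + N + 1)) :=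
      lt_add_of_pos_right _ (by positivity)
    rw [add_zero, closure_Ioo hlt.ne]
    exact left_mem_Icc.2 hlt.le
  refine mem_of_superset (residual_of_dense_open hopen hdense) fun x hx => ?_
  obtain ⟨m, k, hx⟩ := mem_iUnion₂.1 hx
  refine ⟨4 * (m + N + 1), by omega, ?_⟩
  have hcount : ((4 * (m + N + 1) - m : ℕ) : ℝ) ≤
      blockCount b x (fun _ : Fin 1 => 0) (4 * (m + N + 1)) := by
    exact_mod_cast sub_le_blockCount_zero_of_mem_Ico (by omega) k (Ioo_subset_Ico_self hx)
  rw [Nat.cast_sub (by omega)] at hcount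
  rw [lt_div_iff₀ (by positivity)]
  push_cast at hcount ⊢
  linarith

lemma eventually_residual_not_isNormal {b : ℕ} (hb : 1 < b) :
    ∀ᶠ x in residual ℝ, ¬ IsNormal b x := by
  filter_upwards [eventually_countable_forall.2 (eventually_residual_exists_blockCount_zero_gt hb)]
    with x hx
  have hb' : (2 : ℝ) ≤ b := by exact_mod_cast hb
  refine not_isNormal_of_frequently_lt (by omega) ?_ (frequently_atTop.2 hx)
  calc (b : ℝ)⁻¹ ≤ 2⁻¹ := inv_anti₀ two_pos hb'
    _ < 3 / 4 := by norm_num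

lemma fract_mul_mem_Ioo_of_mem_Ioo {β p q x : ℝ} (hβ : 0 < β) (hp : 0 ≤ p) (hq : q ≤ 1) (m : ℤ)
    (hx : x ∈ Ioo ((m + p) / β) ((m + q) / β)) : Int.fract (β * x) ∈ Ioo p q := by
  rw [mem_Ioo, div_lt_iff₀ hβ, lt_div_iff₀ hβ] at hx
  have hfloor : ⌊β * x⌋ = m := Int.floor_eq_iff.2 ⟨by linarith, by linarith⟩
  rw [Int.fract, hfloor, mem_Ioo]
  constructor <;> linarith

lemma eventually_residual_exists_fract_mem_Ioo {b : ℕ} (hb : 1 < b) {p q : ℝ} (hp : 0 ≤ p)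
    (hpq : p < q) (hq : q ≤ 1) :
    ∀ᶠ x in residual ℝ, ∃ n ≥ 1, Int.fract ((b : ℝ) ^ n * x) ∈ Ioo p q := by
  set U : ℕ → ℤ → Set ℝ := fun n m => Ioo ((m + p) / (b : ℝ) ^ n) ((m + q) / b ^ n)
  have hopen : IsOpen (⋃ (n ≥ 1) (m), U n m) :=
    isOpen_iUnion fun _ => isOpen_iUnion fun _ => isOpen_iUnion fun _ => isOpen_Ioo
  have hdense : Dense (⋃ (n ≥ 1) (m), U n m) := by
    refine dense_of_eventually_int_add_div_pow_mem_closure hb hp (hpq.trans_le hq)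
      ((eventually_ge_atTop 1).mono fun n hn m =>
        closure_mono (subset_iUnion₂_of_subset n hn (subset_iUnion _ m)) ?_)
    have hlt : (m + p) / (b : ℝ) ^ n < (m + q) / b ^ n :=
      div_lt_div_of_pos_right (by linarith) (by positivity)
    rw [closure_Ioo hlt.ne]
    exact left_mem_Icc.2 hlt.le
  refine mem_of_superset (residual_of_dense_open hopen hdense) fun x hx => ?_
  simp only [mem_iUnion] at hx
  obtain ⟨n, hn, m, hx⟩ := hx
  exact ⟨n, hn, fract_mul_mem_Ioo_of_mem_Ioo (by positivity) hp hq m hx⟩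

lemma orbitClosure_eq_Icc_of_forall_rat {b : ℕ} {x : ℝ}
    (h : ∀ p q : ℚ, 0 ≤ p → p < q → q ≤ 1 → ∃ n ≥ 1, Int.fract ((b : ℝ) ^ n * x) ∈ Ioo (p : ℝ) q) :
    orbitClosure b x = Icc 0 1 := by
  refine (closure_minimal ?_ isClosed_Icc).antisymm fun y hy => ?_
  · rintro _ ⟨n, -, rfl⟩
    exact ⟨Int.fract_nonneg _, (Int.fract_lt_one _).le⟩
  rw [Real.isTopologicalBasis_Ioo_rat.mem_closure_iff]
  simp only [mem_iUnion, mem_singleton_iff]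
  rintro _ ⟨p, q, hpq, rfl⟩ hyI
  have hp1 : p < 1 := by exact_mod_cast hyI.1.trans_le hy.2
  have hq0 : 0 < q := by exact_mod_cast hy.1.trans_lt hyI.2
  obtain ⟨n, hn, hmem⟩ := h (max p 0) (min q 1) (le_max_right _ _)
    (max_lt (lt_min hpq hp1) (lt_min hq0 one_pos)) (min_le_right _ _)
  push_cast at hmem
  exact ⟨_, ⟨(le_max_left _ _).trans_lt hmem.1, hmem.2.trans_le (min_le_left _ _)⟩, n, hn, rfl⟩

lemma eventually_residual_orbitClosure_eq_Icc {b : ℕ} (hb : 1 < b) :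
    ∀ᶠ x in residual ℝ, orbitClosure b x = Icc 0 1 := by
  have hhit : ∀ᶠ x in residual ℝ, ∀ p q : ℚ, 0 ≤ p → p < q → q ≤ 1 →
      ∃ n ≥ 1, Int.fract ((b : ℝ) ^ n * x) ∈ Ioo (p : ℝ) q := by
    refine eventually_countable_forall.2 fun p => eventually_countable_forall.2 fun q => ?_
    simp only [eventually_imp_distrib_left]
    intro hp hpq hq
    exact eventually_residual_exists_fract_mem_Ioo hb (by exact_mod_cast hp)
      (by exact_mod_cast hpq) (by exact_mod_cast hq)
  filter_upwards [hhit] with x hx using orbitClosure_eq_Icc_of_forall_rat hx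

lemma Set.Countable.compl_mem_residual {X : Type*} [TopologicalSpace X] [T1Space X]
    [∀ x : X, NeBot (𝓝[≠] x)] {s : Set X} (hs : s.Countable) : sᶜ ∈ residual X := by
  rw [← biUnion_of_singleton s, compl_iUnion₂]
  exact (countable_bInter_mem hs).2 fun z _ =>
    residual_of_dense_open isOpen_compl_singleton (dense_compl_singleton z)

lemma not_countable_inter_of_mem_residual {X : Type*} [TopologicalSpace X] [BaireSpace X]
    [T1Space X] [∀ x : X, NeBot (𝓝[≠] x)] {s U : Set X} (hs : s ∈ residual X) (hU : IsOpen U)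
    (hne : U.Nonempty) : ¬ (s ∩ U).Countable := fun hc => by
  obtain ⟨x, hxU, hxs, hx⟩ :=
    (dense_of_mem_residual (inter_mem hs hc.compl_mem_residual)).inter_open_nonempty U hU hne
  exact hx ⟨hxs, hxU⟩

theorem stmt9 :
    ∃ E : Set ℝ, E ⊆ Set.Icc 0 1 ∧ ¬ E.Countable ∧
      ∀ x ∈ E, ¬ IsNormal 2 x ∧
        orbitClosure 2 x = Set.Icc 0 1 ∧ orbitClosure 3 x = Set.Icc 0 1 := by
  have hgeneric : ∀ᶠ x in residual ℝ, ¬ IsNormal 2 x ∧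
      orbitClosure 2 x = Icc 0 1 ∧ orbitClosure 3 x = Icc 0 1 :=
    (eventually_residual_not_isNormal one_lt_two).and
      ((eventually_residual_orbitClosure_eq_Icc one_lt_two).and
        (eventually_residual_orbitClosure_eq_Icc (by norm_num)))
  exact ⟨_ ∩ Ioo 0 1, fun x hx => Ioo_subset_Icc_self hx.2,
    not_countable_inter_of_mem_residual hgeneric isOpen_Ioo (nonempty_Ioo.2 one_pos),
    fun x hx => hx.1⟩
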